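/- Let (Δ_t) be adapted to a filtration with conditional mean bounded between D − ε and D + ε (where D − ε > 0) given the past, and second moments bounded so that the overshoot satisfies E[S'_{T'} − τ] ≤ c + c^{1/2}τ^{1/2} + c^{1/2}d^{1/2}, where c = E[Δ²]/(D − ε) and d = w(D + ε). Then the stopping time T' = inf{t : S'_t ≥ τ} of the cumulative sum S'_t satisfies E[T'] ≤ (τ + c^{1/2}τ^{1/2} + c + c^{1/2}d^{1/2} + d)/(D − ε). -/

import Mathlib

open MeasureTheory ProbabilityTheory Filter

/-- Online WADD bound: for adapted increments with conditional mean in `[D − ε, D + ε]`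
(`D − ε > 0`), second moments bounded by `B`, window size `w ≥ 1` and threshold `τ > 0`,
if the overshoot satisfies `E[S'_{T'} − τ] ≤ c + √c·√τ + √c·√d` with
`c = B/(D − ε)` and `d = w(D + ε)`, then
`E[T'] ≤ (τ + √c·√τ + c + √c·√d + d)/(D − ε)`. -/
theorem stmt_11 {Ω : Type*} {m0 : MeasurableSpace Ω} (μ : Measure Ω)
    [IsProbabilityMeasure μ] (ℱ : Filtration ℕ m0)
    (Δ : ℕ → Ω → ℝ) (hadapted : Adapted ℱ Δ) (hint : ∀ t, Integrable (Δ t) μ)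
    (w : ℕ) (hw : 1 ≤ w) (D ε : ℝ) (hε : 0 ≤ ε) (hDε : ε < D)
    (hlow : ∀ t, w < t → ∀ᵐ ω ∂μ, D - ε ≤ (μ[Δ t | ℱ (t - 1)]) ω)
    (hhigh : ∀ t, w < t → ∀ᵐ ω ∂μ, (μ[Δ t | ℱ (t - 1)]) ω ≤ D + ε)
    (B : ℝ) (h2 : ∀ t, ∫ ω, (Δ t ω) ^ 2 ∂μ ≤ B)
    (τ : ℝ) (hτ : 0 < τ)
    (T' : Ω → ℕ)
    (hT' : ∀ ω, T' ω = sInf {k : ℕ | 1 ≤ k ∧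
      τ ≤ ∑ t ∈ Finset.Icc (w + 1) (k + w), Δ t ω})
    (hstop : ∀ n : ℕ, MeasurableSet[ℱ (n + w)] {ω | T' ω ≤ n})
    (c d : ℝ) (hc : c = B / (D - ε)) (hd : d = w * (D + ε))
    (hT'int : Integrable (fun ω => (T' ω : ℝ)) μ)
    (hSint : Integrable (fun ω => ∑ t ∈ Finset.Icc (w + 1) (T' ω + w), Δ t ω) μ)
    (hovershoot : (∫ ω, ∑ t ∈ Finset.Icc (w + 1) (T' ω + w), Δ t ω ∂μ) - τ ≤
      c + Real.sqrt c * Real.sqrt τ + Real.sqrt c * Real.sqrt d) :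
    ∫ ω, (T' ω : ℝ) ∂μ ≤
      (τ + Real.sqrt c * Real.sqrt τ + c + Real.sqrt c * Real.sqrt d + d) / (D - ε) := by
  classical
  have hν0 : 0 < D - ε := by linarith
  -- measurability of T'
  have hTmeasSet : ∀ n : ℕ, MeasurableSet {ω | T' ω ≤ n} :=
    fun n => ℱ.le (n + w) _ (hstop n)
  have hTmeas : Measurable T' := by
    apply measurable_to_countable'
    intro n
    rcases n with _ | m
    · have h0 : T' ⁻¹' {0} = {ω | T' ω ≤ 0} := by ext ω; simp [Nat.le_zero]
      rw [h0]; exact hTmeasSet 0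
    · have h0 : T' ⁻¹' {m + 1} = {ω | T' ω ≤ m + 1} \ {ω | T' ω ≤ m} := by
        ext ω; simp only [Set.mem_preimage, Set.mem_singleton_iff, Set.mem_diff,
          Set.mem_setOf_eq]; omega
      rw [h0]; exact (hTmeasSet (m + 1)).diff (hTmeasSet m)
  -- the events {k ≤ T'}
  have hAmeas : ∀ k : ℕ, MeasurableSet {ω | k ≤ T' ω} := by
    intro k
    have : {ω | k ≤ T' ω} = {ω | T' ω ≤ k - 1}ᶜ ∪ (if k = 0 then Set.univ else ∅) := by
      ext ω; rcases Nat.eq_zero_or_pos k with hk | hk <;> simp [hk] <;> omega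
    rw [this]
    exact ((hTmeasSet (k - 1)).compl).union (by split <;> simp)
  -- the summands with stopping indicator
  set g : ℕ → Ω → ℝ := fun k ω => if k ≤ T' ω then Δ (k + w) ω else 0 with hgdef
  have hg_eq : ∀ k, g k = Set.indicator {ω | k ≤ T' ω} (Δ (k + w)) := by
    intro k; funext ω; simp [hgdef, Set.indicator_apply]
  have hg_int : ∀ k, Integrable (g k) μ := by
    intro k; rw [hg_eq]; exact (hint (k + w)).indicator (hAmeas k)
  -- key per-term bound via conditional expectation
  have claimB : ∀ k : ℕ, 1 ≤ k →
      (D - ε) * (μ {ω | k ≤ T' ω}).toReal ≤ ∫ ω, g k ω ∂μ := by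
    intro k hk
    have hAk : MeasurableSet[ℱ (k + w - 1)] {ω | k ≤ T' ω} := by
      have h1 : MeasurableSet[ℱ ((k - 1) + w)] {ω | T' ω ≤ k - 1} := hstop (k - 1)
      have h2 : (k - 1) + w = k + w - 1 := by omega
      rw [h2] at h1
      have h3 : {ω | k ≤ T' ω} = {ω | T' ω ≤ k - 1}ᶜ := by
        ext ω; simp only [Set.mem_setOf_eq, Set.mem_compl_iff]; omega
      rw [h3]; exact h1.compl
    have hcond := setIntegral_condExp (ℱ.le (k + w - 1)) (hint (k + w)) hAk
    rw [hg_eq, integral_indicator (hAmeas k), ← hcond]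
    have hlb := hlow (k + w) (by omega)
    calc (D - ε) * (μ {ω | k ≤ T' ω}).toReal
        = ∫ _ in {ω | k ≤ T' ω}, (D - ε) ∂μ := by
          rw [setIntegral_const, smul_eq_mul, mul_comm]; rfl
      _ ≤ ∫ ω in {ω | k ≤ T' ω}, (μ[Δ (k + w) | ℱ (k + w - 1)]) ω ∂μ := by
          apply setIntegral_mono_ae_restrict
            (integrableOn_const (measure_ne_top μ _))
            integrable_condExp.integrableOn
          exact ae_restrict_of_ae hlb
  -- reindexing the window sum
  have reindex : ∀ (j : ℕ) (ω : Ω),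
      ∑ t ∈ Finset.Icc (w + 1) (j + w), Δ t ω = ∑ k ∈ Finset.Icc 1 j, Δ (k + w) ω := by
    intro j ω
    rw [show w + 1 = 1 + w from Nat.add_comm w 1, ← Finset.map_add_right_Icc 1 j w,
      Finset.sum_map]
    rfl
  have claimA : ∀ (n : ℕ) (ω : Ω),
      (∑ k ∈ Finset.Icc 1 n, g k ω) =
        ∑ t ∈ Finset.Icc (w + 1) (min (T' ω) n + w), Δ t ω := by
    intro n ω
    rw [reindex (min (T' ω) n) ω]
    have hfil : Finset.Icc 1 (min (T' ω) n) =
        (Finset.Icc 1 n).filter (fun k => k ≤ T' ω) := by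
      ext k; simp only [Finset.mem_filter, Finset.mem_Icc]; omega
    rw [hfil, Finset.sum_filter]
  -- the truncated expectation as a sum of probabilities
  have claimM : ∀ (n : ℕ) (ω : Ω),
      ((min (T' ω) n : ℕ) : ℝ) = ∑ k ∈ Finset.Icc 1 n, (if k ≤ T' ω then (1 : ℝ) else 0) := by
    intro n ω
    have hfil : (Finset.Icc 1 n).filter (fun k => k ≤ T' ω) =
        Finset.Icc 1 (min (T' ω) n) := by
      ext k; simp only [Finset.mem_filter, Finset.mem_Icc]; omega
    rw [Finset.sum_boole, hfil, Nat.card_Icc]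
    norm_num
  have hone : ∀ k : ℕ, ∫ ω, (if k ≤ T' ω then (1 : ℝ) else 0) ∂μ
      = (μ {ω | k ≤ T' ω}).toReal := by
    intro k
    have h : (fun ω => if k ≤ T' ω then (1 : ℝ) else 0)
        = Set.indicator {ω | k ≤ T' ω} 1 := by
      funext ω; simp [Set.indicator_apply]
    rw [h, integral_indicator_one (hAmeas k)]; rfl
  -- optional-stopping style lower bound at finite horizon n
  have stepn : ∀ n : ℕ,
      (D - ε) * (∫ ω, ((min (T' ω) n : ℕ) : ℝ) ∂μ) ≤
        ∫ ω, (∑ t ∈ Finset.Icc (w + 1) (min (T' ω) n + w), Δ t ω) ∂μ := by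
    intro n
    have hLHS : ∫ ω, ((min (T' ω) n : ℕ) : ℝ) ∂μ
        = ∑ k ∈ Finset.Icc 1 n, (μ {ω | k ≤ T' ω}).toReal := by
      rw [show (fun ω => ((min (T' ω) n : ℕ) : ℝ))
          = fun ω => ∑ k ∈ Finset.Icc 1 n, (if k ≤ T' ω then (1 : ℝ) else 0)
          from funext (claimM n)]
      rw [integral_finset_sum]
      · exact Finset.sum_congr rfl fun k _ => hone k
      · intro k _
        have h : (fun ω => if k ≤ T' ω then (1 : ℝ) else 0)
            = Set.indicator {ω | k ≤ T' ω} (fun _ => (1 : ℝ)) := by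
          funext ω; simp [Set.indicator_apply]
        rw [h]; exact (integrable_const (1 : ℝ)).indicator (hAmeas k)
    have hRHS : ∫ ω, (∑ t ∈ Finset.Icc (w + 1) (min (T' ω) n + w), Δ t ω) ∂μ
        = ∑ k ∈ Finset.Icc 1 n, ∫ ω, g k ω ∂μ := by
      rw [show (fun ω => ∑ t ∈ Finset.Icc (w + 1) (min (T' ω) n + w), Δ t ω)
          = fun ω => ∑ k ∈ Finset.Icc 1 n, g k ω from funext fun ω => (claimA n ω).symm]
      exact integral_finset_sum _ fun k _ => hg_int k
    rw [hLHS, hRHS, Finset.mul_sum]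
    exact Finset.sum_le_sum fun k hk => claimB k (Finset.mem_Icc.1 hk).1
  -- decomposition at horizon n
  have hintmin : ∀ n : ℕ,
      Integrable (fun ω => ∑ t ∈ Finset.Icc (w + 1) (min (T' ω) n + w), Δ t ω) μ := by
    intro n
    rw [show (fun ω => ∑ t ∈ Finset.Icc (w + 1) (min (T' ω) n + w), Δ t ω)
        = fun ω => ∑ k ∈ Finset.Icc 1 n, g k ω from funext fun ω => (claimA n ω).symm]
    exact integrable_finset_sum _ fun k _ => hg_int k
  have stepd : ∀ n : ℕ, 1 ≤ n →
      ∫ ω, (∑ t ∈ Finset.Icc (w + 1) (min (T' ω) n + w), Δ t ω) ∂μ ≤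
        (∫ ω, Set.indicator {ω | T' ω ≤ n}
          (fun ω => ∑ t ∈ Finset.Icc (w + 1) (T' ω + w), Δ t ω) ω ∂μ)
        + τ * (μ ({ω | T' ω ≤ n}ᶜ)).toReal := by
    intro n hn
    have hE := hTmeasSet n
    rw [← integral_add_compl hE (hintmin n)]
    have e1 : ∫ ω in {ω | T' ω ≤ n}, (∑ t ∈ Finset.Icc (w + 1) (min (T' ω) n + w), Δ t ω) ∂μ
        = ∫ ω, Set.indicator {ω | T' ω ≤ n}
            (fun ω => ∑ t ∈ Finset.Icc (w + 1) (T' ω + w), Δ t ω) ω ∂μ := by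
      rw [integral_indicator hE]
      apply setIntegral_congr_fun hE
      intro ω hω
      simp only [Set.mem_setOf_eq] at hω
      simp only [min_eq_left hω]
    have e2 : ∫ ω in {ω | T' ω ≤ n}ᶜ,
        (∑ t ∈ Finset.Icc (w + 1) (min (T' ω) n + w), Δ t ω) ∂μ
        ≤ τ * (μ ({ω | T' ω ≤ n}ᶜ)).toReal := by
      have hb : ∀ ω ∈ {ω | T' ω ≤ n}ᶜ,
          (∑ t ∈ Finset.Icc (w + 1) (min (T' ω) n + w), Δ t ω) ≤ τ := by
        intro ω hω
        simp only [Set.mem_compl_iff, Set.mem_setOf_eq, not_le] at hω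
        rw [min_eq_right hω.le]
        by_contra hcon
        push_neg at hcon
        have hmem : n ∈ {k : ℕ | 1 ≤ k ∧
            τ ≤ ∑ t ∈ Finset.Icc (w + 1) (k + w), Δ t ω} := ⟨hn, hcon.le⟩
        have := Nat.sInf_le hmem
        rw [← hT' ω] at this
        omega
      calc ∫ ω in {ω | T' ω ≤ n}ᶜ,
            (∑ t ∈ Finset.Icc (w + 1) (min (T' ω) n + w), Δ t ω) ∂μ
          ≤ ∫ _ in {ω | T' ω ≤ n}ᶜ, τ ∂μ :=
            setIntegral_mono_on (hintmin n).integrableOn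
              (integrableOn_const (measure_ne_top μ _)) hE.compl hb
        _ = τ * (μ ({ω | T' ω ≤ n}ᶜ)).toReal := by
            rw [setIntegral_const, smul_eq_mul, mul_comm]; rfl
    linarith [e1, e2]
  -- limits
  have hmin_meas : ∀ n : ℕ, AEStronglyMeasurable (fun ω => ((min (T' ω) n : ℕ) : ℝ)) μ := by
    intro n
    exact ((measurable_from_top.comp (hTmeas.min measurable_const))).aestronglyMeasurable
  have tend1 : Tendsto (fun n => ∫ ω, ((min (T' ω) n : ℕ) : ℝ) ∂μ) atTop
      (nhds (∫ ω, (T' ω : ℝ) ∂μ)) := by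
    apply tendsto_integral_of_dominated_convergence (fun ω => (T' ω : ℝ))
      hmin_meas hT'int
    · intro n
      filter_upwards with ω
      rw [Real.norm_eq_abs, abs_of_nonneg (by positivity)]
      exact_mod_cast min_le_left (T' ω) n
    · filter_upwards with ω
      apply tendsto_atTop_of_eventually_const (i₀ := T' ω)
      intro n hn
      rw [min_eq_left hn]
  have tend2 : Tendsto (fun n => ∫ ω, Set.indicator {ω | T' ω ≤ n}
        (fun ω => ∑ t ∈ Finset.Icc (w + 1) (T' ω + w), Δ t ω) ω ∂μ) atTop
      (nhds (∫ ω, (∑ t ∈ Finset.Icc (w + 1) (T' ω + w), Δ t ω) ∂μ)) := by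
    apply tendsto_integral_of_dominated_convergence
      (fun ω => |∑ t ∈ Finset.Icc (w + 1) (T' ω + w), Δ t ω|)
      (fun n => hSint.1.indicator (hTmeasSet n)) hSint.abs
    · intro n
      filter_upwards with ω
      simpa [Real.norm_eq_abs] using
        norm_indicator_le_norm_self
          (fun ω => ∑ t ∈ Finset.Icc (w + 1) (T' ω + w), Δ t ω) ω (s := {ω | T' ω ≤ n})
    · filter_upwards with ω
      apply tendsto_atTop_of_eventually_const (i₀ := T' ω)
      intro n hn
      exact Set.indicator_of_mem (show ω ∈ {ω | T' ω ≤ n} from hn)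
        (fun ω => ∑ t ∈ Finset.Icc (w + 1) (T' ω + w), Δ t ω)
  have tend3 : Tendsto (fun n => (μ ({ω | T' ω ≤ n}ᶜ)).toReal) atTop (nhds 0) := by
    have h0 : Tendsto (fun n => ∫ ω, Set.indicator ({ω | T' ω ≤ n}ᶜ)
        (fun _ => (1 : ℝ)) ω ∂μ) atTop (nhds (∫ _ω, (0 : ℝ) ∂μ)) := by
      apply tendsto_integral_of_dominated_convergence (fun _ => (1 : ℝ))
        (fun n => (stronglyMeasurable_const.aestronglyMeasurable).indicator
          (hTmeasSet n).compl)
        (integrable_const 1)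
      · intro n
        filter_upwards with ω
        rw [Set.indicator_apply]
        split_ifs <;> simp [Real.norm_eq_abs]
      · filter_upwards with ω
        apply tendsto_atTop_of_eventually_const (i₀ := T' ω)
        intro n hn
        exact Set.indicator_of_notMem (by simp [hn]) _
    rw [integral_zero] at h0
    apply h0.congr
    intro n
    rw [show (fun _ => (1:ℝ)) = (1 : Ω → ℝ) from rfl,
      integral_indicator_one (hTmeasSet n).compl]; rfl
  -- combine
  have key : (D - ε) * ∫ ω, (T' ω : ℝ) ∂μ ≤
      ∫ ω, (∑ t ∈ Finset.Icc (w + 1) (T' ω + w), Δ t ω) ∂μ := by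
    have hA := tend1.const_mul (D - ε)
    have hB := tend2.add (tend3.const_mul τ)
    rw [mul_zero, add_zero] at hB
    apply le_of_tendsto_of_tendsto hA hB
    filter_upwards [eventually_ge_atTop 1] with n hn
    calc (D - ε) * ∫ ω, ((min (T' ω) n : ℕ) : ℝ) ∂μ
        ≤ ∫ ω, (∑ t ∈ Finset.Icc (w + 1) (min (T' ω) n + w), Δ t ω) ∂μ := stepn n
      _ ≤ _ := by
          have := stepd n hn
          linarith [this]
  have hd0 : 0 ≤ d := by
    rw [hd]
    have hw0 : (0 : ℝ) ≤ (w : ℝ) := Nat.cast_nonneg w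
    nlinarith
  rw [le_div_iff₀ hν0]
  nlinarith [key, hovershoot]
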